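/- arXiv:1505.00623 — 2 statements merged into one kernel-verified Lean document; each statement's English description precedes it below -/
import Mathlib

section
/- Let χ₁ be a nonprincipal Dirichlet character modulo a prime q and χ₂ a nonprincipal Dirichlet character modulo a distinct prime ℓ. Then there exists a prime p, different from q and ℓ, such that χ₁(p) ≠ χ₂(p). -/
/-!
By the Chinese remainder theorem and Dirichlet's theorem there are arbitrarily large primes `p`
with `p ≡ 1 (mod q)` and `p ≡ a (mod ℓ)`, where `χ₂ a ≠ 1`; for such `p`,
`χ₁ p = 1 ≠ χ₂ p`.
-/

theorem Nat.forall_exists_prime_gt_and_eq_mod_and_eq_mod {m n : ℕ} [NeZero m] [NeZero n]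
    (hmn : m.Coprime n) {a : ZMod m} {b : ZMod n} (ha : IsUnit a) (hb : IsUnit b) (N : ℕ) :
    ∃ p > N, p.Prime ∧ (p : ZMod m) = a ∧ (p : ZMod n) = b := by
  let e := ZMod.chineseRemainder hmn
  have hab : IsUnit (e.symm (a, b)) := (Prod.isUnit_iff.mpr ⟨ha, hb⟩).map e.symm
  obtain ⟨p, hpN, hp, hpab⟩ := Nat.forall_exists_prime_gt_and_eq_mod hab N
  have hcast : ((p : ZMod m), (p : ZMod n)) = (a, b) := by
    rw [← e.apply_symm_apply (a, b), ← hpab, map_natCast]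
    rfl
  exact ⟨p, hpN, hp, Prod.ext_iff.mp hcast⟩

theorem DirichletCharacter.forall_exists_prime_gt_apply_ne {R : Type*} [CommMonoidWithZero R]
    {m n : ℕ} [NeZero m] [NeZero n] (hmn : m.Coprime n) (χ₁ : DirichletCharacter R m)
    {χ₂ : DirichletCharacter R n} (hχ₂ : χ₂ ≠ 1) (N : ℕ) :
    ∃ p > N, p.Prime ∧ χ₁ (p : ZMod m) ≠ χ₂ (p : ZMod n) := by
  obtain ⟨u, hu⟩ := MulChar.ne_one_iff.mp hχ₂
  obtain ⟨p, hpN, hp, hp₁, hpu⟩ :=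
    Nat.forall_exists_prime_gt_and_eq_mod_and_eq_mod hmn isUnit_one u.isUnit N
  refine ⟨p, hpN, hp, ?_⟩
  rw [hp₁, hpu, map_one]
  exact hu.symm

theorem exists_prime_distinguishing_characters_general (q ℓ : ℕ) (hq : q.Prime) (hl : ℓ.Prime)
    (hne : q ≠ ℓ) (χ₁ : DirichletCharacter ℂ q)
    (χ₂ : DirichletCharacter ℂ ℓ) (hχ₂ : χ₂ ≠ 1) :
    ∃ p : ℕ, p.Prime ∧ p ≠ q ∧ p ≠ ℓ ∧ χ₁ (p : ZMod q) ≠ χ₂ (p : ZMod ℓ) := by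
  have : NeZero q := ⟨hq.ne_zero⟩
  have : NeZero ℓ := ⟨hl.ne_zero⟩
  obtain ⟨p, hp_gt, hp, hχ⟩ := χ₁.forall_exists_prime_gt_apply_ne
    ((Nat.coprime_primes hq hl).mpr hne) hχ₂ (max q ℓ)
  exact ⟨p, hp, ((le_max_left q ℓ).trans_lt hp_gt).ne', ((le_max_right q ℓ).trans_lt hp_gt).ne', hχ⟩

theorem exists_prime_distinguishing_characters (q ℓ : ℕ) (hq : q.Prime) (hl : ℓ.Prime)
    (hne : q ≠ ℓ) (χ₁ : DirichletCharacter ℂ q) (hχ₁ : χ₁ ≠ 1)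
    (χ₂ : DirichletCharacter ℂ ℓ) (hχ₂ : χ₂ ≠ 1) :
    ∃ p : ℕ, p.Prime ∧ p ≠ q ∧ p ≠ ℓ ∧ χ₁ (p : ZMod q) ≠ χ₂ (p : ZMod ℓ) :=
  exists_prime_distinguishing_characters_general q ℓ hq hl hne χ₁ χ₂ hχ₂
end

section
/- Let χ₁, χ₂ be Dirichlet characters and P a prime, and define coefficients d_n by B(s,P) L(s,χ₁) = ∑_{n≥1} d_n n^{−s} where B(s,P) = ∏_{p≤P} (1 − χ₁(p)p^{−s})(1 − χ₂(p)p^{−s}). If n > 1 is divisible by p² for some prime p ≤ P, then d_n = 0. -/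
/-!
Split off the Euler factor `E_p` at `p` from `B(s,P)`. The coefficients of `∏_{r ≠ p} E_r` vanish
on multiples of `p`, and the coefficient of `E_p · L(s,χ₁)` at `p²k` is
`χ₁(p²k) - (χ₁(p) + χ₂(p)) χ₁(pk) + χ₁(p) χ₂(p) χ₁(k) = 0` by complete multiplicativity of `χ₁`.
In a Dirichlet convolution of two such functions, every term at a multiple of `p²` vanishes:
either the first divisor is a multiple of `p`, or it is prime to `p` and the second one takes up `p²`.
-/

/-- Coefficients of the Euler factor `(1 - u p^{-s})(1 - v p^{-s})`. -/
def eulerFactorCoeff (u v : ℂ) (p : ℕ) : ArithmeticFunction ℂ :=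
  ⟨fun n => if n = 0 then 0 else if n = 1 then 1 else if n = p then -(u + v)
      else if n = p ^ 2 then u * v else 0, rfl⟩

/-- Coefficients of `B(s,P) = ∏_{p ≤ P} (1 - χ₁(p)p^{-s})(1 - χ₂(p)p^{-s})`. -/
def bCoeff (χ₁ χ₂ : ℕ → ℂ) (P : ℕ) : ArithmeticFunction ℂ :=
  ∏ p ∈ (Finset.range (P + 1)).filter Nat.Prime, eulerFactorCoeff (χ₁ p) (χ₂ p) p

/-- The coefficients of the Dirichlet series `L(s,χ) = ∑ χ(n) n^{-s}`. -/
def lCoeff (χ : ℕ → ℂ) : ArithmeticFunction ℂ :=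
  ⟨fun n => if n = 0 then 0 else χ n, rfl⟩

namespace ArithmeticFunction

variable {R : Type*}

theorem mul_apply_eq_sum_of_support_subset [Semiring R] (f g : ArithmeticFunction R) {n : ℕ}
    {s : Finset ℕ} (hs : s ⊆ n.divisors) (hf : ∀ d ∉ s, f d = 0) :
    (f * g) n = ∑ d ∈ s, f d * g (n / d) := by
  rw [mul_apply, Nat.sum_divisorsAntidiagonal (fun a b => f a * g b)]
  refine (Finset.sum_subset hs fun d _ hd => ?_).symm
  rw [hf d hd, zero_mul]

theorem mul_apply_eq_zero_of_dvd [Semiring R] {p : ℕ} (hp : p.Prime) {f g : ArithmeticFunction R}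
    (hf : ∀ m, p ∣ m → f m = 0) (hg : ∀ m, p ∣ m → g m = 0) {m : ℕ} (hm : p ∣ m) :
    (f * g) m = 0 := by
  rw [mul_apply]
  refine Finset.sum_eq_zero fun x hx => ?_
  rw [← (Nat.mem_divisorsAntidiagonal.mp hx).1] at hm
  rcases hp.dvd_mul.mp hm with h | h
  · rw [hf _ h, zero_mul]
  · rw [hg _ h, mul_zero]

theorem prod_apply_eq_zero_of_dvd {ι : Type*} [CommSemiring R] {p : ℕ}
    (hp : p.Prime) (s : Finset ι) {F : ι → ArithmeticFunction R}
    (hF : ∀ i ∈ s, ∀ m, p ∣ m → F i m = 0) {m : ℕ} (hm : p ∣ m) :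
    (∏ i ∈ s, F i) m = 0 := by
  refine Finset.prod_induction F (fun G => ∀ m, p ∣ m → G m = 0)
    (fun _ _ hf hg _ => mul_apply_eq_zero_of_dvd hp hf hg) (fun m hm => ?_) hF m hm
  rw [one_apply_ne fun h => hp.ne_one (Nat.dvd_one.mp (h ▸ hm))]

theorem mul_apply_eq_zero_of_sq_dvd [Semiring R] {p : ℕ} (hp : p.Prime) {f g : ArithmeticFunction R}
    (hf : ∀ m, p ∣ m → f m = 0) (hg : ∀ m, p ^ 2 ∣ m → g m = 0) {n : ℕ} (hn : p ^ 2 ∣ n) :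
    (f * g) n = 0 := by
  rw [mul_apply]
  refine Finset.sum_eq_zero fun x hx => ?_
  by_cases hpx : p ∣ x.1
  · rw [hf _ hpx, zero_mul]
  have hcop : Nat.Coprime (p ^ 2) x.1 := (hp.coprime_iff_not_dvd.mpr hpx).pow_left 2
  rw [← (Nat.mem_divisorsAntidiagonal.mp hx).1] at hn
  rw [hg _ (hcop.dvd_of_dvd_mul_left hn), mul_zero]

end ArithmeticFunction

open ArithmeticFunction

theorem eulerFactorCoeff_eq_zero_of_not_dvd (u v : ℂ) {p m : ℕ} (hm : ¬ m ∣ p ^ 2) :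
    eulerFactorCoeff u v p m = 0 := by
  have h1 : m ≠ 1 := by rintro rfl; exact hm (one_dvd _)
  have hp : m ≠ p := by rintro rfl; exact hm (dvd_pow_self m two_ne_zero)
  have hp2 : m ≠ p ^ 2 := by rintro rfl; exact hm dvd_rfl
  simp [eulerFactorCoeff, h1, hp, hp2]

theorem eulerFactorCoeff_apply_eq_zero_of_dvd (u v : ℂ) {p q m : ℕ} (hp : p.Prime)
    (hq : q.Prime) (hpq : p ≠ q) (hm : p ∣ m) : eulerFactorCoeff u v q m = 0 := by
  refine eulerFactorCoeff_eq_zero_of_not_dvd u v fun hmq => hpq ?_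
  exact (Nat.prime_dvd_prime_iff_eq hp hq).mp (hp.dvd_of_dvd_pow (hm.trans hmq))

theorem eulerFactorCoeff_apply_one (u v : ℂ) (p : ℕ) : eulerFactorCoeff u v p 1 = 1 := by
  simp [eulerFactorCoeff]

theorem eulerFactorCoeff_apply_self (u v : ℂ) {p : ℕ} (hp : 1 < p) :
    eulerFactorCoeff u v p p = -(u + v) := by
  simp [eulerFactorCoeff, hp.ne', (zero_lt_one.trans hp).ne']

theorem eulerFactorCoeff_apply_sq (u v : ℂ) {p : ℕ} (hp : 1 < p) :
    eulerFactorCoeff u v p (p ^ 2) = u * v := by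
  simp [eulerFactorCoeff, hp.ne', (zero_lt_one.trans hp).ne', (lt_self_pow₀ hp one_lt_two).ne']

theorem lCoeff_apply_of_ne_zero (χ : ℕ → ℂ) {n : ℕ} (hn : n ≠ 0) : lCoeff χ n = χ n :=
  if_neg hn

theorem eulerFactorCoeff_mul_lCoeff_apply_eq_zero {χ : ℕ → ℂ}
    (hχ : ∀ a b, χ (a * b) = χ a * χ b) (v : ℂ) {p n : ℕ} (hp : p.Prime) (hn : p ^ 2 ∣ n) :
    (eulerFactorCoeff (χ p) v p * lCoeff χ) n = 0 := by
  obtain ⟨k, rfl⟩ := hn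
  rcases eq_or_ne k 0 with rfl | hk
  · simp
  have hp2 : p ^ 2 ≠ 0 := pow_ne_zero 2 hp.ne_zero
  have hpk : p ^ 2 * k ≠ 0 := mul_ne_zero hp2 hk
  rw [mul_apply_eq_sum_of_support_subset _ _ (Nat.divisors_subset_of_dvd hpk (dvd_mul_right _ _))
      fun d hd => eulerFactorCoeff_eq_zero_of_not_dvd _ _ fun h => hd (Nat.mem_divisors.mpr ⟨h, hp2⟩),
    Nat.divisors_prime_pow hp, Finset.sum_map]
  have hdiv : p ^ 2 * k / p = p * k := by rw [sq, mul_assoc, Nat.mul_div_cancel_left _ hp.pos]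
  simp only [Finset.sum_range_succ, Finset.sum_range_zero, Function.Embedding.coeFn_mk, pow_zero,
    pow_one, Nat.div_one, hdiv, Nat.mul_div_cancel_left _ (pow_pos hp.pos 2), zero_add]
  rw [eulerFactorCoeff_apply_one, eulerFactorCoeff_apply_self _ _ hp.one_lt,
    eulerFactorCoeff_apply_sq _ _ hp.one_lt, lCoeff_apply_of_ne_zero _ hpk,
    lCoeff_apply_of_ne_zero _ (mul_ne_zero hp.ne_zero hk), lCoeff_apply_of_ne_zero _ hk,
    sq, mul_assoc, hχ, hχ]
  ring

theorem dCoeff_eq_zero_of_sq_dvd_general {q ℓ : ℕ} (P : ℕ)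
    (χ₁ : DirichletCharacter ℂ q) (χ₂ : DirichletCharacter ℂ ℓ) (n p : ℕ)
    (hp : p.Prime) (hpP : p ≤ P) (hdvd : p ^ 2 ∣ n) :
    (bCoeff (fun m => χ₁ (m : ZMod q)) (fun m => χ₂ (m : ZMod ℓ)) P *
        lCoeff (fun m => χ₁ (m : ZMod q))) n = 0 := by
  have hmem : p ∈ (Finset.range (P + 1)).filter Nat.Prime := by
    simp [Nat.lt_succ_iff.mpr hpP, hp]
  rw [bCoeff, ← Finset.prod_erase_mul _ _ hmem, mul_assoc]
  refine mul_apply_eq_zero_of_sq_dvd hp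
    (fun m hm => prod_apply_eq_zero_of_dvd hp _ (fun r hr => ?_) hm)
    (fun m hm => eulerFactorCoeff_mul_lCoeff_apply_eq_zero (χ := fun m : ℕ => χ₁ m)
      (by simp) _ hp hm) hdvd
  obtain ⟨hrp, hr⟩ := Finset.mem_erase.mp hr
  exact fun m => eulerFactorCoeff_apply_eq_zero_of_dvd _ _ hp (Finset.mem_filter.mp hr).2 hrp.symm

theorem dCoeff_eq_zero_of_sq_dvd {q ℓ : ℕ} (P : ℕ) (hP : P.Prime)
    (χ₁ : DirichletCharacter ℂ q) (χ₂ : DirichletCharacter ℂ ℓ) (n p : ℕ)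
    (hn : 1 < n) (hp : p.Prime) (hpP : p ≤ P) (hdvd : p ^ 2 ∣ n) :
    (bCoeff (fun m => χ₁ (m : ZMod q)) (fun m => χ₂ (m : ZMod ℓ)) P *
        lCoeff (fun m => χ₁ (m : ZMod q))) n = 0 :=
  dCoeff_eq_zero_of_sq_dvd_general P χ₁ χ₂ n p hp hpP hdvd
end
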